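/- arXiv:2402.03356 — 11 statements merged into one kernel-verified Lean document; each statement's English description precedes it below -/
import Mathlib

section
/- The collection β := {σ_n : n ∈ ℕ⁺} is a base for the topology τ on ℕ⁺ that it generates; that is, β covers ℕ⁺ and β is a topological basis of the topology τ := generateFrom β. -/
/-- `σ n` is the set of positive integers coprime to `n`. -/
def sigmaSet (n : ℕ+) : Set ℕ+ := {m : ℕ+ | Nat.gcd (n : ℕ) (m : ℕ) = 1}

/-- The base `β = {σ n : n ∈ ℕ⁺}`. -/
def betaBase : Set (Set ℕ+) := {s : Set ℕ+ | ∃ n : ℕ+, s = sigmaSet n}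

/-- The topology `τ` on `ℕ⁺` generated by `β`. -/
def tau : TopologicalSpace ℕ+ := TopologicalSpace.generateFrom betaBase

lemma beta_cover : ⋃₀ betaBase = Set.univ := by
  apply Set.eq_univ_of_forall
  intro m
  exact ⟨sigmaSet 1, ⟨1, rfl⟩, by simp [sigmaSet]⟩

theorem beta_is_basis :
    (⋃₀ betaBase = Set.univ) ∧ @TopologicalSpace.IsTopologicalBasis ℕ+ tau betaBase := by
  refine ⟨beta_cover, @TopologicalSpace.IsTopologicalBasis.mk ℕ+ tau betaBase ?_ beta_cover rfl⟩
  rintro s ⟨a, rfl⟩ t ⟨b, rfl⟩ x ⟨hxa, hxb⟩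
  refine ⟨sigmaSet (a * b), ⟨a * b, rfl⟩, ?_, ?_⟩
  · simp only [sigmaSet, Set.mem_setOf_eq, PNat.mul_coe] at *
    exact Nat.Coprime.mul hxa hxb
  · intro y hy
    simp only [sigmaSet, Set.mem_setOf_eq, PNat.mul_coe] at *
    exact Nat.coprime_mul_iff_left.mp hy
end

section
/- The topology τ on ℕ⁺ generated by β := {σ_n : n ∈ ℕ⁺} is strictly coarser than the Golomb topology on ℕ⁺, i.e. the topology generated by the arithmetic progressions {b + n·a : n ≥ 0} ∩ ℕ⁺ with a, b ∈ ℕ⁺ and gcd(a,b) = 1: every τ-open set is Golomb-open, but not conversely. -/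
/-- The Golomb topology on `ℕ⁺`, generated by the coprime arithmetic progressions
`{b + n·a : n ≥ 0}` with `gcd(a,b) = 1`. -/
def golomb : TopologicalSpace ℕ+ :=
  TopologicalSpace.generateFrom
    {s : Set ℕ+ | ∃ a b : ℕ+, Nat.gcd (a : ℕ) (b : ℕ) = 1 ∧
      s = {m : ℕ+ | ∃ n : ℕ, (m : ℕ) = (b : ℕ) + n * (a : ℕ)}}

theorem tau_strictly_coarser_than_golomb :
    (∀ s : Set ℕ+, tau.IsOpen s → golomb.IsOpen s) ∧
      ∃ s : Set ℕ+, golomb.IsOpen s ∧ ¬ tau.IsOpen s := by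
  constructor
  · intro s hs
    letI := golomb
    induction hs with
    | basic s hs =>
      obtain ⟨n, rfl⟩ := hs
      have heq : sigmaSet n =
          ⋃ m ∈ sigmaSet n, {x : ℕ+ | ∃ k : ℕ, (x : ℕ) = (m : ℕ) + k * (n : ℕ)} := by
        ext x
        simp only [Set.mem_iUnion, Set.mem_setOf_eq]
        constructor
        · intro hx; exact ⟨x, hx, 0, by simp⟩
        · rintro ⟨m, hm, k, hk⟩
          show Nat.gcd (n : ℕ) (x : ℕ) = 1
          rw [hk]
          have : Nat.Coprime (n : ℕ) (m : ℕ) := hm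
          exact (Nat.coprime_add_mul_right_right (n:ℕ) (m:ℕ) k).mpr this
      rw [heq]
      exact isOpen_biUnion fun m hm =>
        TopologicalSpace.GenerateOpen.basic _ ⟨n, m, hm, rfl⟩
    | univ => exact isOpen_univ
    | inter s t _ _ h1 h2 => exact IsOpen.inter h1 h2
    | sUnion S _ h => exact isOpen_sUnion h
  · refine ⟨{m : ℕ+ | ∃ n : ℕ, (m : ℕ) = 2 + n * 3}, ?_, ?_⟩
    · exact TopologicalSpace.GenerateOpen.basic _ ⟨3, 2, by norm_num, rfl⟩
    · intro h
      have key : ∀ s : Set ℕ+, tau.IsOpen s → s.Nonempty → (1 : ℕ+) ∈ s := by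
        intro s hs
        induction hs with
        | basic s hs =>
          obtain ⟨n, rfl⟩ := hs
          intro _
          show Nat.gcd (n : ℕ) ((1 : ℕ+) : ℕ) = 1
          simp
        | univ => intro _; trivial
        | inter s t _ _ h1 h2 =>
          rintro ⟨x, hx1, hx2⟩
          exact ⟨h1 ⟨x, hx1⟩, h2 ⟨x, hx2⟩⟩
        | sUnion S _ h =>
          rintro ⟨x, t, ht, hx⟩
          exact ⟨t, ht, h t ht ⟨x, hx⟩⟩
      have h1 := key _ h ⟨2, 0, by norm_num⟩
      obtain ⟨n, hn⟩ := h1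
      have : ((1 : ℕ+) : ℕ) = 1 := rfl
      omega
end

section
/- The topological space X := (ℕ⁺, τ) does not satisfy the T₀ separation axiom: there exist two distinct points of ℕ⁺ that are not topologically distinguishable in τ. -/
open TopologicalSpace in
theorem inseparable_generateFrom_iff {α : Type*} {g : Set (Set α)} {x y : α} :
    @Inseparable α (generateFrom g) x y ↔ ∀ s ∈ g, (x ∈ s ↔ y ∈ s) := by
  let := generateFrom g
  refine ⟨fun h s hs => h.mem_open_iff (isOpen_generateFrom_of_mem hs), fun h => ?_⟩
  rw [inseparable_def, nhds_generateFrom, nhds_generateFrom]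
  congr! 3 with s
  exact and_congr_left fun hs => h s hs

theorem mem_sigmaSet_iff_disjoint_primeFactors {m n : ℕ+} :
    m ∈ sigmaSet n ↔ Disjoint (n : ℕ).primeFactors (m : ℕ).primeFactors :=
  (Nat.disjoint_primeFactors n.ne_zero m.ne_zero).symm

theorem tau_inseparable_of_primeFactors_eq {m n : ℕ+}
    (h : (m : ℕ).primeFactors = (n : ℕ).primeFactors) : @Inseparable ℕ+ tau m n := by
  refine inseparable_generateFrom_iff.mpr ?_
  rintro _ ⟨k, rfl⟩
  rw [mem_sigmaSet_iff_disjoint_primeFactors, mem_sigmaSet_iff_disjoint_primeFactors, h]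

theorem tau_not_T0 :
    ∃ x y : ℕ+, x ≠ y ∧ @Inseparable ℕ+ tau x y :=
  ⟨2, 4, by decide, tau_inseparable_of_primeFactors_eq (Nat.primeFactors_pow_succ 2 1).symm⟩
end

section
/- The topological space X := (ℕ⁺, τ) is hyperconnected: any two nonempty τ-open subsets of ℕ⁺ have nonempty intersection (equivalently, ℕ⁺ is an irreducible space under τ). -/
lemma one_mem_of_open_nonempty :
    ∀ U : Set ℕ+, TopologicalSpace.GenerateOpen betaBase U → U.Nonempty → (1 : ℕ+) ∈ U := by
  intro U h
  induction h with
  | basic s hs =>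
      intro _
      obtain ⟨n, rfl⟩ := hs
      simp [sigmaSet]
  | univ => intro _; trivial
  | inter s t _ _ ihs iht =>
      rintro ⟨x, hxs, hxt⟩
      exact ⟨ihs ⟨x, hxs⟩, iht ⟨x, hxt⟩⟩
  | sUnion S _ ih =>
      rintro ⟨x, s, hs, hxs⟩
      exact ⟨s, hs, ih s hs ⟨x, hxs⟩⟩

theorem tau_hyperconnected :
    ∀ U V : Set ℕ+, tau.IsOpen U → tau.IsOpen V →
      U.Nonempty → V.Nonempty → (U ∩ V).Nonempty := by
  intro U V hU hV hUne hVne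
  exact ⟨1, one_mem_of_open_nonempty U hU hUne, one_mem_of_open_nonempty V hV hVne⟩
end

section
/- The topological space X := (ℕ⁺, τ) is ultraconnected: any two nonempty τ-closed subsets of ℕ⁺ have nonempty intersection. -/
lemma open_mem_of_primes {U : Set ℕ+} (hU : TopologicalSpace.GenerateOpen betaBase U)
    {x y : ℕ+} (h : ∀ p : ℕ, p.Prime → p ∣ (x : ℕ) → p ∣ (y : ℕ)) (hy : y ∈ U) : x ∈ U := by
  induction hU with
  | basic s hs =>
      obtain ⟨n, rfl⟩ := hs
      simp only [sigmaSet, Set.mem_setOf_eq] at hy ⊢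
      rw [Nat.coprime_iff_gcd_eq_one.symm] at hy ⊢
      by_contra hx
      obtain ⟨p, hp, hpn, hpx⟩ := Nat.Prime.not_coprime_iff_dvd.mp hx
      exact Nat.Prime.not_coprime_iff_dvd.mpr ⟨p, hp, hpn, h p hp hpx⟩ hy
  | univ => trivial
  | inter s t _ _ ihs iht => exact ⟨ihs hy.1, iht hy.2⟩
  | sUnion S _ ih =>
      obtain ⟨s, hs, hys⟩ := hy
      exact ⟨s, hs, ih s hs hys⟩

theorem tau_ultraconnected :
    ∀ C D : Set ℕ+, @IsClosed ℕ+ tau C → @IsClosed ℕ+ tau D →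
      C.Nonempty → D.Nonempty → (C ∩ D).Nonempty := by
  intro C D hC hD ⟨c, hc⟩ ⟨d, hd⟩
  refine ⟨c * d, ?_, ?_⟩
  · by_contra h
    exact (open_mem_of_primes hC.isOpen_compl
      (fun p hp hpc => dvd_mul_of_dvd_left hpc _) h) hc
  · by_contra h
    exact (open_mem_of_primes hD.isOpen_compl
      (fun p hp hpd => dvd_mul_of_dvd_right hpd _) h) hd
end

section
/- For every prime number p, the closure in X of the singleton {p} equals M_p, the set of all positive multiples of p: cl_X({p}) = {m ∈ ℕ⁺ : p ∣ m}. -/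
theorem closure_singleton_prime (p : ℕ+) (hp : (p : ℕ).Prime) :
    @closure ℕ+ tau {p} = {m : ℕ+ | (p : ℕ) ∣ (m : ℕ)} := by
  letI := tau
  ext m
  simp only [Set.mem_setOf_eq]
  constructor
  · intro hm
    by_contra hdvd
    have hopen : IsOpen (sigmaSet p) :=
      TopologicalSpace.isOpen_generateFrom_of_mem ⟨p, rfl⟩
    have hmem : m ∈ sigmaSet p := (Nat.Prime.coprime_iff_not_dvd hp).mpr hdvd
    obtain ⟨y, hy, hyp⟩ := mem_closure_iff.mp hm _ hopen hmem
    rw [Set.mem_singleton_iff] at hyp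
    rw [hyp] at hy
    have : Nat.gcd (p : ℕ) (p : ℕ) = 1 := hy
    rw [Nat.gcd_self] at this
    exact hp.one_lt.ne' this
  · intro hdvd
    rw [mem_closure_iff]
    intro U hU hmU
    have hU' : TopologicalSpace.GenerateOpen betaBase U := hU
    refine ⟨p, ?_, rfl⟩
    induction hU' with
    | basic s hs =>
        obtain ⟨n, rfl⟩ := hs
        exact Nat.Coprime.coprime_dvd_right hdvd hmU
    | univ => trivial
    | inter s t hs ht ihs iht => exact ⟨ihs hs hmU.1, iht ht hmU.2⟩
    | sUnion S hS ih =>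
        obtain ⟨t, htS, hmt⟩ := hmU
        exact ⟨t, htS, ih t htS (hS t htS) hmt⟩
end

section
/- For every integer n > 1, the closure in X of the singleton {n} equals the intersection over all prime divisors p of n of the sets M_p: cl_X({n}) = ⋂_{p prime, p ∣ n} {m ∈ ℕ⁺ : p ∣ m}. -/
theorem closure_singleton_eq_iInter (n : ℕ+) (hn : 1 < n) :
    @closure ℕ+ tau {n} =
      ⋂ (p : ℕ) (_ : p.Prime ∧ p ∣ (n : ℕ)), {m : ℕ+ | p ∣ (m : ℕ)} := by
  letI : TopologicalSpace ℕ+ := tau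
  ext m
  simp only [Set.mem_iInter, Set.mem_setOf_eq]
  constructor
  · intro hm p ⟨hp, hpn⟩
    by_contra hpm
    have hp1 : (1 : ℕ) < p := hp.one_lt
    set q : ℕ+ := ⟨p, by omega⟩ with hq
    have hopen : @IsOpen ℕ+ tau (sigmaSet q) :=
      TopologicalSpace.isOpen_generateFrom_of_mem ⟨q, rfl⟩
    have hmem : m ∈ sigmaSet q := (hp.coprime_iff_not_dvd).2 hpm
    obtain ⟨x, hxσ, hxn⟩ :=
      (mem_closure_iff.1 hm) (sigmaSet q) hopen hmem
    rw [Set.mem_singleton_iff] at hxn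
    subst hxn
    exact (hp.coprime_iff_not_dvd).1 hxσ hpn
  · intro h
    rw [mem_closure_iff]
    intro o ho hmo
    suffices hno : n ∈ o by exact ⟨n, hno, rfl⟩
    change TopologicalSpace.GenerateOpen betaBase o at ho
    induction ho with
    | basic s hs =>
      obtain ⟨k, rfl⟩ := hs
      have hmk : Nat.gcd (k : ℕ) (m : ℕ) = 1 := hmo
      show Nat.gcd (k : ℕ) (n : ℕ) = 1
      by_contra hne
      obtain ⟨p, hp, hpd⟩ := Nat.exists_prime_and_dvd hne
      have hpk : p ∣ (k : ℕ) := hpd.trans (Nat.gcd_dvd_left _ _)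
      have hpn : p ∣ (n : ℕ) := hpd.trans (Nat.gcd_dvd_right _ _)
      have hpm : p ∣ (m : ℕ) := h p ⟨hp, hpn⟩
      have : p ∣ Nat.gcd (k : ℕ) (m : ℕ) := Nat.dvd_gcd hpk hpm
      rw [hmk] at this
      exact hp.one_lt.ne' (Nat.dvd_one.1 this)
    | univ => trivial
    | inter s t _ _ ihs iht => exact ⟨ihs hmo.1, iht hmo.2⟩
    | sUnion S _ ih =>
      obtain ⟨s, hsS, hms⟩ := hmo
      exact ⟨s, hsS, ih s hsS hms⟩
end

section
/- The set P of prime numbers is infinite if and only if P is dense in the topological space X := (ℕ⁺, τ). -/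
theorem betaBase_isBasis :
    @TopologicalSpace.IsTopologicalBasis ℕ+ tau betaBase := by
  letI := tau
  refine ⟨?_, ?_, rfl⟩
  · rintro t₁ ⟨n, rfl⟩ t₂ ⟨m, rfl⟩ x ⟨hx1, hx2⟩
    refine ⟨sigmaSet (n * m), ⟨n * m, rfl⟩, ?_, ?_⟩
    · show Nat.gcd ((n * m : ℕ+) : ℕ) (x : ℕ) = 1
      push_cast
      exact Nat.Coprime.mul hx1 hx2
    · intro y hy
      have : Nat.Coprime ((n : ℕ) * m) y := by
        have := hy
        simpa [sigmaSet, Nat.Coprime] using this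
      exact ⟨Nat.Coprime.coprime_dvd_left ⟨m, rfl⟩ this,
        Nat.Coprime.coprime_dvd_left ⟨(n : ℕ), mul_comm _ _⟩ this⟩
  · apply Set.eq_univ_of_forall
    intro x
    exact ⟨sigmaSet 1, ⟨1, rfl⟩, by simp [sigmaSet]⟩

theorem primes_infinite_iff_dense :
    {p : ℕ+ | (p : ℕ).Prime}.Infinite ↔ @Dense ℕ+ tau {p : ℕ+ | (p : ℕ).Prime} := by
  letI := tau
  constructor
  · intro _
    rw [betaBase_isBasis.dense_iff]
    rintro o ⟨n, rfl⟩ -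
    obtain ⟨p, hpn, hp⟩ := Nat.exists_infinite_primes ((n : ℕ) + 1)
    refine ⟨⟨p, hp.pos⟩, ?_, hp⟩
    show Nat.gcd (n : ℕ) p = 1
    exact Nat.Coprime.symm ((Nat.Prime.coprime_iff_not_dvd hp).2
      (fun h => absurd (Nat.le_of_dvd n.pos h) (by omega)))
  · intro _
    have : {p : ℕ | p.Prime}.Infinite := Nat.infinite_setOf_prime
    have hinj : Set.InjOn (fun p : ℕ+ => (p : ℕ)) {p : ℕ+ | (p : ℕ).Prime} :=
      fun a _ b _ h => PNat.coe_injective h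
    have himg : (fun p : ℕ+ => (p : ℕ)) '' {p : ℕ+ | (p : ℕ).Prime} = {p : ℕ | p.Prime} := by
      ext k
      constructor
      · rintro ⟨q, hq, rfl⟩; exact hq
      · intro hk; exact ⟨⟨k, hk.pos⟩, hk, rfl⟩
    intro hfin
    exact this (himg ▸ Set.Finite.image _ hfin)
end

section
/- The set P of prime numbers is dense in the subspace X₁ := (ℕ⁺ \ {1}, τ₁), where τ₁ is the subspace topology inherited from τ: the closure of P in X₁ equals ℕ⁺ \ {1}. -/
/-- The subspace topology on `ℕ⁺ \ {1}`. -/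
def tau1 : TopologicalSpace {n : ℕ+ // n ≠ 1} :=
  TopologicalSpace.induced (Subtype.val) tau

lemma sigma_inter (a b : ℕ+) : sigmaSet (a * b) = sigmaSet a ∩ sigmaSet b := by
  ext m
  simp only [sigmaSet, Set.mem_setOf_eq, Set.mem_inter_iff, PNat.mul_coe]
  exact Nat.coprime_mul_iff_left

lemma open_basis {U : Set ℕ+} (h : TopologicalSpace.GenerateOpen betaBase U) :
    ∀ x ∈ U, ∃ n : ℕ+, x ∈ sigmaSet n ∧ sigmaSet n ⊆ U := by
  induction h with
  | basic s hs =>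
      obtain ⟨n, rfl⟩ := hs
      exact fun x hx => ⟨n, hx, subset_rfl⟩
  | univ =>
      intro x _
      refine ⟨1, ?_, fun y _ => trivial⟩
      simp [sigmaSet]
  | inter U V _ _ ihU ihV =>
      intro x hx
      obtain ⟨a, hxa, haU⟩ := ihU x hx.1
      obtain ⟨b, hxb, hbV⟩ := ihV x hx.2
      refine ⟨a * b, ?_, ?_⟩
      · rw [sigma_inter]; exact ⟨hxa, hxb⟩
      · rw [sigma_inter]
        exact fun y hy => ⟨haU hy.1, hbV hy.2⟩
  | sUnion S _ ih =>
      intro x hx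
      obtain ⟨t, ht, hxt⟩ := hx
      obtain ⟨n, hn, hsub⟩ := ih t ht x hxt
      exact ⟨n, hn, hsub.trans (Set.subset_sUnion_of_mem ht)⟩

lemma exists_prime_in_sigma (n : ℕ+) :
    ∃ p : ℕ, p.Prime ∧ Nat.gcd (n : ℕ) p = 1 := by
  obtain ⟨p, hle, hp⟩ := Nat.exists_infinite_primes ((n : ℕ) + 1)
  refine ⟨p, hp, ?_⟩
  have hnd : ¬ p ∣ (n : ℕ) := fun hdvd =>
    absurd (Nat.le_of_dvd n.pos hdvd) (by omega)
  exact Nat.Coprime.symm ((Nat.Prime.coprime_iff_not_dvd hp).mpr hnd)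

theorem primes_dense_in_X1 :
    @closure {n : ℕ+ // n ≠ 1} tau1 {q : {n : ℕ+ // n ≠ 1} | ((q : ℕ+) : ℕ).Prime} =
      Set.univ := by
  letI : TopologicalSpace ℕ+ := tau
  letI : TopologicalSpace {n : ℕ+ // n ≠ 1} := tau1
  rw [Set.eq_univ_iff_forall]
  intro x
  rw [mem_closure_iff]
  intro o ho hxo
  rw [show tau1 = TopologicalSpace.induced (Subtype.val) tau from rfl] at ho
  rw [isOpen_induced_iff] at ho
  obtain ⟨U, hU, rfl⟩ := ho
  obtain ⟨n, hxn, hsub⟩ := open_basis hU x hxo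
  obtain ⟨p, hp, hgcd⟩ := exists_prime_in_sigma n
  have hp1 : (⟨p, hp.pos⟩ : ℕ+) ≠ 1 := by
    intro h
    have : p = 1 := congrArg (PNat.val) h
    exact hp.one_lt.ne' this
  refine ⟨⟨⟨p, hp.pos⟩, hp1⟩, ?_, ?_⟩
  · exact hsub hgcd
  · exact hp
end

section
/- Let A be a nonempty subset of the set P of prime numbers. Then A is dense in the topological space X := (ℕ⁺, τ) if and only if A is infinite. -/
/-! The sets `σ n` form a basis, since `σ (n * m) = σ n ∩ σ m`; so `A` is dense iff every `n`
is coprime to some element of `A`. For a prime `p`, being coprime to `n` means `p ∤ n`: an infinite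
set of primes escapes the finitely many divisors of `n`, while a finite one consists of divisors of
its own product. -/

open TopologicalSpace

theorem sigmaSet_mul (n m : ℕ+) : sigmaSet (n * m) = sigmaSet n ∩ sigmaSet m := by
  ext x
  exact Nat.coprime_mul_iff_left

theorem one_mem_sigmaSet (n : ℕ+) : 1 ∈ sigmaSet n := Nat.gcd_one_right n

theorem isTopologicalBasis_betaBase : @IsTopologicalBasis ℕ+ tau betaBase := by
  refine @IsTopologicalBasis.mk ℕ+ tau betaBase ?_ ?_ rfl
  · rintro _ ⟨n, rfl⟩ _ ⟨m, rfl⟩ x hx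
    exact ⟨sigmaSet (n * m), ⟨n * m, rfl⟩, (sigmaSet_mul n m).symm ▸ hx, (sigmaSet_mul n m).le⟩
  · exact Set.sUnion_eq_univ_iff.2 fun x => ⟨sigmaSet 1, ⟨1, rfl⟩, Nat.gcd_one_left x⟩

theorem dense_tau_iff_forall_exists_coprime {A : Set ℕ+} :
    @Dense ℕ+ tau A ↔ ∀ n : ℕ+, ∃ a ∈ A, Nat.Coprime n a := by
  rw [@IsTopologicalBasis.dense_iff _ tau _ isTopologicalBasis_betaBase]
  constructor
  · intro h n
    exact h _ ⟨n, rfl⟩ ⟨1, one_mem_sigmaSet n⟩ |>.imp fun a ha => ⟨ha.2, ha.1⟩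
  · rintro h _ ⟨n, rfl⟩ -
    exact (h n).imp fun a ha => ⟨ha.2, ha.1⟩

theorem Set.Infinite.exists_not_dvd {A : Set ℕ+} (hA : A.Infinite) (n : ℕ+) :
    ∃ a ∈ A, ¬ (a : ℕ) ∣ n := by
  have hdvd : {a : ℕ+ | (a : ℕ) ∣ n}.Finite :=
    (Nat.divisors n).finite_toSet.preimage PNat.coe_injective.injOn |>.subset
      fun a ha => Nat.mem_divisors.2 ⟨ha, n.ne_zero⟩
  exact (hA.sdiff hdvd).nonempty

theorem Set.Finite.exists_forall_not_coprime {A : Set ℕ+} (hA : A.Finite) (h1 : 1 ∉ A) :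
    ∃ n : ℕ+, ∀ a ∈ A, ¬ Nat.Coprime n a := by
  refine ⟨∏ a ∈ hA.toFinset, a, fun a ha hcop => h1 ?_⟩
  have hdvd : a ∣ ∏ a ∈ hA.toFinset, a := Finset.dvd_prod_of_mem _ (hA.mem_toFinset.2 ha)
  exact PNat.coe_eq_one_iff.1 (hcop.symm.eq_one_of_dvd (PNat.dvd_iff.1 hdvd)) ▸ ha

theorem dense_iff_infinite_of_subset_primes_general
    (A : Set ℕ+) (hA : A ⊆ {p : ℕ+ | (p : ℕ).Prime}) :
    @Dense ℕ+ tau A ↔ A.Infinite := by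
  rw [dense_tau_iff_forall_exists_coprime]
  constructor
  · intro hdense hfin
    obtain ⟨n, hn⟩ := hfin.exists_forall_not_coprime fun h1 => Nat.not_prime_one (hA h1)
    obtain ⟨a, ha, hcop⟩ := hdense n
    exact hn a ha hcop
  · intro hinf n
    obtain ⟨p, hp, hndvd⟩ := hinf.exists_not_dvd n
    exact ⟨p, hp, ((hA hp).coprime_iff_not_dvd.2 hndvd).symm⟩

theorem dense_iff_infinite_of_subset_primes
    (A : Set ℕ+) (hA : A ⊆ {p : ℕ+ | (p : ℕ).Prime}) (hne : A.Nonempty) :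
    @Dense ℕ+ tau A ↔ A.Infinite :=
  dense_iff_infinite_of_subset_primes_general A hA
end

section
/- Every subset of the topological space X := (ℕ⁺, τ) is either dense in X or nowhere dense in X (its closure has empty interior). -/
lemma one_mem_of_open {U : Set ℕ+} (h : TopologicalSpace.GenerateOpen betaBase U)
    (hne : U.Nonempty) : (1 : ℕ+) ∈ U := by
  induction h with
  | basic s hs => obtain ⟨n, rfl⟩ := hs; simp [sigmaSet]
  | univ => trivial
  | inter s t hs ht ihs iht =>
      obtain ⟨x, hx⟩ := hne
      exact ⟨ihs ⟨x, hx.1⟩, iht ⟨x, hx.2⟩⟩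
  | sUnion S hS ih =>
      obtain ⟨x, s, hsS, hxs⟩ := hne
      exact ⟨s, hsS, ih s hsS ⟨x, hxs⟩⟩

theorem dense_or_nowhere_dense (A : Set ℕ+) :
    @Dense ℕ+ tau A ∨ @interior ℕ+ tau (@closure ℕ+ tau A) = ∅ := by
  letI : TopologicalSpace ℕ+ := tau
  have hopen : ∀ U : Set ℕ+, IsOpen U → U.Nonempty → (1 : ℕ+) ∈ U := by
    intro U hU hne
    exact one_mem_of_open hU hne
  by_cases h : (1 : ℕ+) ∈ closure A
  · left
    intro x
    rw [mem_closure_iff]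
    intro o ho hxo
    have h1 : (1 : ℕ+) ∈ o := hopen o ho ⟨x, hxo⟩
    exact (mem_closure_iff.mp h) o ho h1
  · right
    rw [Set.eq_empty_iff_forall_notMem]
    intro x hx
    rw [mem_interior] at hx
    obtain ⟨U, hUsub, hUopen, hxU⟩ := hx
    exact h (hUsub (hopen U hUopen ⟨x, hxU⟩))
end
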